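/- arXiv:2303.11985 — 2 statements merged into one kernel-verified Lean document; each statement's English description precedes it below -/
import Mathlib

section
/- For every k ≥ 2 and every n ≥ 3, the graph P_k □ C_n contains a Type-2 neighbourhood chain: there exist two neighbourhood chains of Type 1, each of length k, in P_k □ C_n which together satisfy the defining conditions of an NC-T2. -/
/-- The open neighborhood of `u` in `G`, as a `Finset`. -/
noncomputable def nbr {V : Type*} [Fintype V] (G : SimpleGraph V) (u : V) : Finset V :=
  (G.neighborSet u).toFinite.toFinset

/-- `f` is a distance magic labeling of `G`: a bijection from the vertex set onto
`{1, …, |V(G)|}` whose neighbor sums are all equal. -/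
def IsDistanceMagicLabeling {V : Type*} [Fintype V] (G : SimpleGraph V) (f : V → ℕ) : Prop :=
  Set.BijOn f Set.univ (Set.Icc 1 (Fintype.card V)) ∧
    ∃ S : ℕ, ∀ u : V, ∑ v ∈ nbr G u, f v = S

/-- `G` is distance magic if it admits a distance magic labeling. -/
def IsDistanceMagic {V : Type*} [Fintype V] (G : SimpleGraph V) : Prop :=
  ∃ f : V → ℕ, IsDistanceMagicLabeling G f

/-- `u 1, u 2, …, u k` (1-based indexing) is a neighbourhood chain of Type 1 (NC-T1)
of length `k` in `G`, with `N i := G.neighborSet (u i)`, `N 1 \ N 2 = {v₁}` and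
`N k \ N (k-1) = {vₖ}`. -/
def IsNCT1 {V : Type*} (G : SimpleGraph V) (k : ℕ) (u : ℕ → V) (v₁ vₖ : V) : Prop :=
  2 ≤ k ∧
  -- (1) consecutive neighborhoods meet
  (∀ i, 1 ≤ i → i + 1 ≤ k → (G.neighborSet (u i) ∩ G.neighborSet (u (i + 1))).Nonempty) ∧
  -- (2) non-consecutive neighborhoods are disjoint, except possibly the pair (N 1, N k)
  (∀ i j, 1 ≤ i → i + 2 ≤ j → j ≤ k → ¬(i = 1 ∧ j = k) →
    G.neighborSet (u i) ∩ G.neighborSet (u j) = ∅) ∧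
  -- (3) the two end differences are singletons, with distinct elements
  G.neighborSet (u 1) \ G.neighborSet (u 2) = {v₁} ∧
  G.neighborSet (u k) \ G.neighborSet (u (k - 1)) = {vₖ} ∧
  v₁ ≠ vₖ ∧
  -- (4) forward differences are contained in the next neighborhood
  (∀ i, 1 ≤ i → i + 2 ≤ k → G.neighborSet (u (i + 1)) \ G.neighborSet (u i) ⊆
    G.neighborSet (u (i + 2))) ∧
  -- (5) consecutive differences are nonempty
  (∀ i, 1 ≤ i → i + 1 ≤ k →
    (G.neighborSet (u i) \ G.neighborSet (u (i + 1))).Nonempty ∧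
    (G.neighborSet (u (i + 1)) \ G.neighborSet (u i)).Nonempty)

/-- Two NC-T1 chains `N 1 ⋯ N k` (neighborhoods of `u 1, …, u k`) and
`N (k+1) ⋯ N (2k)` (neighborhoods of `w 1, …, w k`) form a Type-2 neighbourhood
chain (NC-T2). -/
def IsNCT2 {V : Type*} (G : SimpleGraph V) (k : ℕ) (u w : ℕ → V) (a b c d : V) : Prop :=
  IsNCT1 G k u a b ∧ IsNCT1 G k w c d ∧
  -- (i)
  G.neighborSet (u 1) ∩ G.neighborSet (u 2) ∩ G.neighborSet (w 1) =
    G.neighborSet (w 1) \ G.neighborSet (w 2) ∧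
  (G.neighborSet (w 1) \ G.neighborSet (w 2)).Nonempty ∧
  G.neighborSet (u k) ∩ G.neighborSet (w k) ∩ G.neighborSet (w (k - 1)) =
    G.neighborSet (u k) \ G.neighborSet (u (k - 1)) ∧
  (G.neighborSet (u k) \ G.neighborSet (u (k - 1))).Nonempty ∧
  -- (ii)
  (∀ i, 2 ≤ i → i ≤ k - 1 →
    (G.neighborSet (u i) ∩ G.neighborSet (u (i + 1)) ∩ G.neighborSet (w i) ∩
      G.neighborSet (w (i - 1))).Nonempty)

/-- The cylindrical grid graph `P_m □ C_n`: vertices are pairs `(i, j)` with `i` a row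
index (path coordinate) and `j ∈ ZMod n` (cycle coordinate); `(i,j)` and `(i',j')` are
adjacent iff `i = i'` and `j - j' ≡ ±1 (mod n)`, or `j = j'` and `|i - i'| = 1`. -/
def PC (m n : ℕ) : SimpleGraph (Fin m × ZMod n) :=
  SimpleGraph.fromRel (fun p q =>
    (p.1 = q.1 ∧ (p.2 - q.2 = 1 ∨ q.2 - p.2 = 1)) ∨
    (p.2 = q.2 ∧ (p.1.val + 1 = q.1.val ∨ q.1.val + 1 = p.1.val)))

lemma zconst {n : ℕ} (hn : 3 ≤ n) {a : ℕ} (ha : 0 < a) (ha2 : a < n) :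
    ((a : ℕ) : ZMod n) ≠ 0 := by
  haveI : NeZero n := ⟨by omega⟩
  intro h
  have := ZMod.val_cast_of_lt ha2
  rw [h, ZMod.val_zero] at this; omega

lemma zone {n : ℕ} (hn : 3 ≤ n) : (1 : ZMod n) ≠ 0 := by
  have := zconst hn (a := 1) (by omega) (by omega); simpa using this

lemma ztwo {n : ℕ} (hn : 3 ≤ n) : (2 : ZMod n) ≠ 0 := by
  have := zconst hn (a := 2) (by omega) (by omega); push_cast at this; exact this

lemma pc_adj {k n : ℕ} (hn : 3 ≤ n) (p q : Fin k × ZMod n) :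
    (PC k n).Adj p q ↔
      ((p.1 = q.1 ∧ (p.2 - q.2 = 1 ∨ q.2 - p.2 = 1)) ∨
       (p.2 = q.2 ∧ (p.1.val + 1 = q.1.val ∨ q.1.val + 1 = p.1.val))) := by
  rw [PC, SimpleGraph.fromRel_adj]
  constructor
  · rintro ⟨hne, h | h⟩
    · exact h
    · rcases h with ⟨h1, h2 | h2⟩ | ⟨h1, h2 | h2⟩
      · exact Or.inl ⟨h1.symm, Or.inr h2⟩
      · exact Or.inl ⟨h1.symm, Or.inl h2⟩
      · exact Or.inr ⟨h1.symm, Or.inr h2⟩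
      · exact Or.inr ⟨h1.symm, Or.inl h2⟩
  · intro h
    refine ⟨?_, Or.inl h⟩
    rcases h with ⟨h1, h2 | h2⟩ | ⟨h1, h2 | h2⟩ <;> intro he <;> subst he
    · simp at h2; exact zone hn h2.symm
    · simp at h2; exact zone hn h2.symm
    · omega
    · omega

def ch (k n : ℕ) (hk : 0 < k) (t : ZMod n) : ℕ → Fin k × ZMod n :=
  fun i => (⟨(i - 1) % k, Nat.mod_lt _ hk⟩, (i : ZMod n) + t)

lemma mem_ch {k n : ℕ} (hk : 0 < k) (hn : 3 ≤ n) (t : ZMod n) {i : ℕ}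
    (h1 : 1 ≤ i) (h2 : i ≤ k) (p : Fin k × ZMod n) :
    p ∈ (PC k n).neighborSet (ch k n hk t i) ↔
      (p.1.val + 1 = i ∧ (p.2 = (i : ZMod n) + t + 1 ∨ p.2 = (i : ZMod n) + t - 1)) ∨
      (p.2 = (i : ZMod n) + t ∧ (p.1.val = i ∨ p.1.val + 2 = i)) := by
  obtain ⟨r, c⟩ := p
  simp only [SimpleGraph.mem_neighborSet, pc_adj hn, ch, Fin.ext_iff,
    Nat.mod_eq_of_lt (show i - 1 < k by omega)]
  constructor
  · rintro (⟨hr, hc | hc⟩ | ⟨hc, hr | hr⟩)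
    · exact Or.inl ⟨by omega, Or.inr (by linear_combination -hc)⟩
    · exact Or.inl ⟨by omega, Or.inl (by linear_combination hc)⟩
    · exact Or.inr ⟨hc.symm, Or.inl (by omega)⟩
    · exact Or.inr ⟨hc.symm, Or.inr (by omega)⟩
  · rintro (⟨hr, hc | hc⟩ | ⟨hc, hr | hr⟩)
    · exact Or.inl ⟨by omega, Or.inr (by linear_combination hc)⟩
    · exact Or.inl ⟨by omega, Or.inl (by linear_combination -hc)⟩
    · exact Or.inr ⟨hc.symm, Or.inl (by omega)⟩
    · exact Or.inr ⟨hc.symm, Or.inr (by omega)⟩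

lemma mem_ch' {k n : ℕ} (hk : 0 < k) (hn : 3 ≤ n) (t : ZMod n) {i : ℕ}
    (h1 : 1 ≤ i) (h2 : i ≤ k) (r : Fin k) (c : ZMod n) :
    (r, c) ∈ (PC k n).neighborSet (ch k n hk t i) ↔
      (r.val + 1 = i ∧ (c = (i : ZMod n) + t + 1 ∨ c = (i : ZMod n) + t - 1)) ∨
      (c = (i : ZMod n) + t ∧ (r.val = i ∨ r.val + 2 = i)) :=
  mem_ch hk hn t h1 h2 (r, c)

lemma ch_isNCT1 {k n : ℕ} (hk : 2 ≤ k) (hn : 3 ≤ n) (hk0 : 0 < k) (t : ZMod n) :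
    IsNCT1 (PC k n) k (ch k n hk0 t) (⟨0, hk0⟩, t)
      (⟨k - 1, by omega⟩, (k : ZMod n) + t + 1) := by
  have h2z := ztwo hn
  have h1z := zone hn
  refine ⟨hk, ?_, ?_, ?_, ?_, ?_, ?_, ?_⟩
  -- (1) consecutive neighborhoods meet
  · intro i hi1 hik
    refine ⟨(⟨i, by omega⟩, (i : ZMod n) + t), ?_, ?_⟩
    · exact (mem_ch' hk0 hn t hi1 (by omega) _ _).mpr (Or.inr ⟨rfl, Or.inl (by simp)⟩)
    · refine (mem_ch' hk0 hn t (by omega) hik _ _).mpr (Or.inl ⟨by simp, Or.inr ?_⟩)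
      push_cast; ring
  -- (2) disjointness
  · intro i j hi1 hij hjk hne
    ext ⟨r, c⟩
    simp only [Set.mem_inter_iff, Set.mem_empty_iff_false, iff_false, not_and]
    intro hpi hpj
    rw [mem_ch' hk0 hn t hi1 (by omega) r c] at hpi
    rw [mem_ch' hk0 hn t (by omega) hjk r c] at hpj
    rcases hpi with ⟨hr1, _⟩ | ⟨hc1, hr1 | hr1⟩ <;>
      rcases hpj with ⟨hr2, _⟩ | ⟨hc2, hr2 | hr2⟩ <;>
      try omega
    -- remaining: r.val = i, r.val + 2 = j, c = i+t = j+t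
    have hj : j = i + 2 := by omega
    subst hj
    apply h2z
    rw [hc1] at hc2
    push_cast at hc2
    linear_combination -hc2
  -- (3a) N1 \ N2 = {v1}
  · apply Set.eq_singleton_iff_unique_mem.mpr
    constructor
    · refine ⟨(mem_ch' hk0 hn t le_rfl (by omega) _ _).mpr
        (Or.inl ⟨by simp, Or.inr (by push_cast; ring)⟩), ?_⟩
      intro hmem
      rw [mem_ch' hk0 hn t (by omega) hk _ _] at hmem
      rcases hmem with ⟨hr, _⟩ | ⟨hc, _⟩
      · simp at hr <;> omega
      · apply h2z; push_cast at hc; linear_combination -hc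
    · rintro ⟨r, c⟩ ⟨hmem, hnot⟩
      rw [mem_ch' hk0 hn t le_rfl (by omega) r c] at hmem
      rcases hmem with ⟨hr, hc | hc⟩ | ⟨hc, hr | hr⟩
      · exfalso; apply hnot
        refine (mem_ch' hk0 hn t (by omega) hk r c).mpr (Or.inr ⟨?_, Or.inr (by omega)⟩)
        rw [hc]; push_cast; ring
      · refine Prod.ext (Fin.ext (by simp <;> omega)) ?_
        simp only []; rw [hc]; push_cast; ring
      · exfalso; apply hnot
        refine (mem_ch' hk0 hn t (by omega) hk r c).mpr (Or.inl ⟨by omega, Or.inr ?_⟩)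
        rw [hc]; push_cast; ring
      · omega
  -- (3b) Nk \ N(k-1) = {vk}
  · have hcast : ((k - 1 : ℕ) : ZMod n) = (k : ZMod n) - 1 := by
      rw [Nat.cast_sub (by omega : 1 ≤ k), Nat.cast_one]
    apply Set.eq_singleton_iff_unique_mem.mpr
    constructor
    · refine ⟨(mem_ch' hk0 hn t (by omega) le_rfl _ _).mpr
        (Or.inl ⟨by simp <;> omega, Or.inl rfl⟩), ?_⟩
      intro hmem
      rw [mem_ch' hk0 hn t (by omega) (by omega) _ _] at hmem
      rcases hmem with ⟨hr, _⟩ | ⟨hc, _⟩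
      · simp at hr <;> omega
      · apply h2z; rw [hcast] at hc; linear_combination hc
    · rintro ⟨r, c⟩ ⟨hmem, hnot⟩
      have hrk := r.isLt
      rw [mem_ch' hk0 hn t (by omega) le_rfl r c] at hmem
      rcases hmem with ⟨hr, hc | hc⟩ | ⟨hc, hr | hr⟩
      · exact Prod.ext (Fin.ext (by simp <;> omega)) hc
      · exfalso; apply hnot
        refine (mem_ch' hk0 hn t (by omega) (by omega) r c).mpr (Or.inr ⟨?_, Or.inl (by omega)⟩)
        rw [hc, hcast]; ring
      · omega
      · exfalso; apply hnot
        refine (mem_ch' hk0 hn t (by omega) (by omega) r c).mpr (Or.inl ⟨by omega, Or.inl ?_⟩)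
        rw [hc, hcast]; ring
  -- v1 ≠ vk
  · intro h
    have := congrArg (fun p => (p.1 : Fin k).val) h
    simp at this; omega
  -- (4) forward difference containment
  · intro i hi1 hik
    rintro ⟨r, c⟩ ⟨hmem, hnot⟩
    rw [mem_ch' hk0 hn t (by omega) (by omega) r c] at hmem
    rw [mem_ch' hk0 hn t hi1 (by omega) r c] at hnot
    rcases hmem with ⟨hr, hc | hc⟩ | ⟨hc, hr | hr⟩
    · refine (mem_ch' hk0 hn t (by omega) hik r c).mpr (Or.inr ⟨?_, Or.inr (by omega)⟩)
      rw [hc]; push_cast; ring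
    · exfalso; apply hnot
      refine Or.inr ⟨?_, Or.inl (by omega)⟩
      rw [hc]; push_cast; ring
    · refine (mem_ch' hk0 hn t (by omega) hik r c).mpr (Or.inl ⟨by omega, Or.inr ?_⟩)
      rw [hc]; push_cast; ring
    · exfalso; apply hnot
      refine Or.inl ⟨by omega, Or.inl ?_⟩
      rw [hc]; push_cast; ring
  -- (5) consecutive differences nonempty
  · intro i hi1 hik
    constructor
    · refine ⟨(⟨i - 1, by omega⟩, (i : ZMod n) + t - 1), ?_, ?_⟩
      · exact (mem_ch' hk0 hn t hi1 (by omega) _ _).mpr (Or.inl ⟨by simp <;> omega, Or.inr rfl⟩)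
      · intro hmem
        rw [mem_ch' hk0 hn t (by omega) hik _ _] at hmem
        rcases hmem with ⟨hr, _⟩ | ⟨hc, _⟩
        · simp at hr <;> omega
        · apply h2z; push_cast at hc; linear_combination -hc
    · refine ⟨(⟨i, by omega⟩, (i : ZMod n) + t + 2), ?_, ?_⟩
      · refine (mem_ch' hk0 hn t (by omega) hik _ _).mpr (Or.inl ⟨by simp, Or.inl ?_⟩)
        push_cast; ring
      · intro hmem
        rw [mem_ch' hk0 hn t hi1 (by omega) _ _] at hmem
        rcases hmem with ⟨hr, _⟩ | ⟨hc, _⟩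
        · simp at hr <;> omega
        · apply h2z; linear_combination hc

/-- For every `k ≥ 2` and `n ≥ 3`, the graph `P_k □ C_n` contains a Type-2
neighbourhood chain: two NC-T1 chains, each of length `k`, forming an NC-T2. -/
theorem Pk_box_Cn_contains_NCT2 (k n : ℕ) (hk : 2 ≤ k) (hn : 3 ≤ n) :
    ∃ (u w : ℕ → Fin k × ZMod n) (a b c d : Fin k × ZMod n),
      IsNCT2 (PC k n) k u w a b c d := by
  have hk0 : 0 < k := by omega
  have h2z := ztwo hn
  have h1z := zone hn
  have hcast : ((k - 1 : ℕ) : ZMod n) = (k : ZMod n) - 1 := by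
    rw [Nat.cast_sub (by omega : 1 ≤ k), Nat.cast_one]
  refine ⟨ch k n hk0 (-1), ch k n hk0 1, (⟨0, hk0⟩, (-1 : ZMod n)),
    (⟨k - 1, by omega⟩, (k : ZMod n) + (-1) + 1), (⟨0, hk0⟩, (1 : ZMod n)),
    (⟨k - 1, by omega⟩, (k : ZMod n) + 1 + 1), ?_⟩
  have hu := ch_isNCT1 hk hn hk0 (-1 : ZMod n)
  have hw := ch_isNCT1 hk hn hk0 (1 : ZMod n)
  refine ⟨hu, hw, ?_, ?_, ?_, ?_, ?_⟩
  -- (i)a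
  · rw [hw.2.2.2.1]
    ext ⟨r, c⟩
    simp only [Set.mem_inter_iff, Set.mem_singleton_iff]
    constructor
    · rintro ⟨⟨h1, h2⟩, h3⟩
      rw [mem_ch' hk0 hn (-1) le_rfl (by omega) r c] at h1
      rw [mem_ch' hk0 hn (-1) (by omega) hk r c] at h2
      rw [mem_ch' hk0 hn 1 le_rfl (by omega) r c] at h3
      rcases h1 with ⟨hr1, hc1 | hc1⟩ | ⟨hc1, hr1 | hr1⟩ <;>
        rcases h2 with ⟨hr2, hc2 | hc2⟩ | ⟨hc2, hr2 | hr2⟩ <;>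
        rcases h3 with ⟨hr3, hc3 | hc3⟩ | ⟨hc3, hr3 | hr3⟩ <;>
        try omega
      all_goals first
        | (exfalso
           try rw [hcast] at hc1
           try rw [hcast] at hc2
           try rw [hcast] at hc3
           try push_cast at hc1 hc2 hc3
           first
             | exact h2z (by linear_combination hc1 - hc2)
             | exact h2z (by linear_combination hc2 - hc1)
             | exact h2z (by linear_combination hc1 - hc3)
             | exact h2z (by linear_combination hc3 - hc1)
             | exact h2z (by linear_combination hc2 - hc3)
             | exact h2z (by linear_combination hc3 - hc2)
             | exact h1z (by linear_combination hc1 - hc2)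
             | exact h1z (by linear_combination hc2 - hc1)
             | exact h1z (by linear_combination hc1 - hc3)
             | exact h1z (by linear_combination hc3 - hc1)
             | exact h1z (by linear_combination hc2 - hc3)
             | exact h1z (by linear_combination hc3 - hc2))
        | (simp only [Prod.mk.injEq]
           refine ⟨Fin.ext (by simp <;> omega), ?_⟩
           try rw [hcast] at hc1
           try push_cast at hc1 ⊢
           linear_combination hc1)
    · rintro h
      simp only [Prod.mk.injEq] at h
      obtain ⟨rfl, rfl⟩ := h
      refine ⟨⟨?_, ?_⟩, ?_⟩
      · exact (mem_ch' hk0 hn (-1) le_rfl (by omega) _ _).mpr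
          (Or.inl ⟨rfl, Or.inl (by push_cast; ring)⟩)
      · exact (mem_ch' hk0 hn (-1) (by omega) hk _ _).mpr
          (Or.inr ⟨by push_cast; ring, Or.inr rfl⟩)
      · exact (mem_ch' hk0 hn 1 le_rfl (by omega) _ _).mpr
          (Or.inl ⟨rfl, Or.inr (by push_cast; ring)⟩)
  -- nonempty a
  · rw [hw.2.2.2.1]; exact Set.singleton_nonempty _
  -- (i)b
  · rw [hu.2.2.2.2.1]
    ext ⟨r, c⟩
    simp only [Set.mem_inter_iff, Set.mem_singleton_iff]
    have hrk := r.isLt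
    constructor
    · rintro ⟨⟨h1, h2⟩, h3⟩
      rw [mem_ch' hk0 hn (-1) (by omega) le_rfl r c] at h1
      rw [mem_ch' hk0 hn 1 (by omega) le_rfl r c] at h2
      rw [mem_ch' hk0 hn 1 (by omega) (by omega : k - 1 ≤ k) r c] at h3
      rcases h1 with ⟨hr1, hc1 | hc1⟩ | ⟨hc1, hr1 | hr1⟩ <;>
        rcases h2 with ⟨hr2, hc2 | hc2⟩ | ⟨hc2, hr2 | hr2⟩ <;>
        rcases h3 with ⟨hr3, hc3 | hc3⟩ | ⟨hc3, hr3 | hr3⟩ <;>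
        try omega
      all_goals first
        | (exfalso
           try rw [hcast] at hc1
           try rw [hcast] at hc2
           try rw [hcast] at hc3
           try push_cast at hc1 hc2 hc3
           first
             | exact h2z (by linear_combination hc1 - hc2)
             | exact h2z (by linear_combination hc2 - hc1)
             | exact h2z (by linear_combination hc1 - hc3)
             | exact h2z (by linear_combination hc3 - hc1)
             | exact h2z (by linear_combination hc2 - hc3)
             | exact h2z (by linear_combination hc3 - hc2)
             | exact h1z (by linear_combination hc1 - hc2)
             | exact h1z (by linear_combination hc2 - hc1)
             | exact h1z (by linear_combination hc1 - hc3)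
             | exact h1z (by linear_combination hc3 - hc1)
             | exact h1z (by linear_combination hc2 - hc3)
             | exact h1z (by linear_combination hc3 - hc2))
        | (simp only [Prod.mk.injEq]
           refine ⟨Fin.ext (by simp <;> omega), ?_⟩
           try rw [hcast] at hc1
           try push_cast at hc1 ⊢
           linear_combination hc1)
    · rintro h
      simp only [Prod.mk.injEq] at h
      obtain ⟨rfl, rfl⟩ := h
      refine ⟨⟨?_, ?_⟩, ?_⟩
      · exact (mem_ch' hk0 hn (-1) (by omega) le_rfl _ _).mpr
          (Or.inl ⟨by simp <;> omega, Or.inl rfl⟩)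
      · exact (mem_ch' hk0 hn 1 (by omega) le_rfl _ _).mpr
          (Or.inl ⟨by simp <;> omega, Or.inr (by ring)⟩)
      · exact (mem_ch' hk0 hn 1 (by omega) (by omega : k - 1 ≤ k) _ _).mpr
          (Or.inr ⟨by rw [hcast]; ring, Or.inl (by simp <;> omega)⟩)
  -- nonempty b
  · rw [hu.2.2.2.2.1]; exact Set.singleton_nonempty _
  -- (ii)
  · intro i hi2 hik
    refine ⟨(⟨i - 1, by omega⟩, (i : ZMod n)), ⟨⟨⟨?_, ?_⟩, ?_⟩, ?_⟩⟩
    · exact (mem_ch' hk0 hn (-1) (by omega) (by omega) _ _).mpr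
        (Or.inl ⟨by simp <;> omega, Or.inl (by push_cast; ring)⟩)
    · exact (mem_ch' hk0 hn (-1) (by omega) (by omega) _ _).mpr
        (Or.inr ⟨by push_cast; ring, Or.inr (by simp <;> omega)⟩)
    · exact (mem_ch' hk0 hn 1 (by omega) (by omega) _ _).mpr
        (Or.inl ⟨by simp <;> omega, Or.inr (by push_cast; ring)⟩)
    · refine (mem_ch' hk0 hn 1 (by omega) (by omega : i - 1 ≤ k) _ _).mpr
        (Or.inr ⟨?_, Or.inl (by simp <;> omega)⟩)
      have : ((i - 1 : ℕ) : ZMod n) = (i : ZMod n) - 1 := by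
        rw [Nat.cast_sub (by omega : 1 ≤ i), Nat.cast_one]
      rw [this]; ring
end

section
/- Let G be a finite simple graph containing a neighbourhood chain of Type 1 (NC-T1) of even length, and let H be any finite simple graph disjoint from G. Then the disjoint union G ∪ H is non-distance magic, i.e., it admits no distance magic labeling. -/
lemma mem_nbr {V : Type*} [Fintype V] (G : SimpleGraph V) (u v : V) :
    v ∈ nbr G u ↔ v ∈ G.neighborSet u := by simp [nbr]

lemma nbr_sum_inl {α β : Type*} [Fintype α] [Fintype β] (G : SimpleGraph α)
    (H : SimpleGraph β) (x : α) :
    nbr (G ⊕g H) (Sum.inl x) = (nbr G x).map ⟨Sum.inl, Sum.inl_injective⟩ := by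
  ext y
  cases y with
  | inl y => simp [mem_nbr]
  | inr y => simp [mem_nbr]


/-- If `G` contains an NC-T1 of even length `2 * n` and `H` is any finite
simple graph (disjoint from `G`), then the disjoint union `G ∪ H` is non-distance magic. -/
theorem disjoint_union_with_even_NCT1_is_NDM {α β : Type*} [Fintype α] [Fintype β]
    (G : SimpleGraph α) (H : SimpleGraph β) (n : ℕ) (hn : 1 ≤ n)
    (u : ℕ → α) (v₁ v₂ : α) (h : IsNCT1 G (2 * n) u v₁ v₂) :
    ¬ IsDistanceMagic (G ⊕g H) := by
  classical
  rintro ⟨f, hbij, S, hS⟩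
  obtain ⟨hk2, -, h2, h3, h4, h5, h6, -⟩ := h
  set k := 2 * n with hk
  set g : α → ℕ := fun x => f (Sum.inl x) with hg
  set N : ℕ → Finset α := fun i => nbr G (u i) with hN
  -- neighbor sums in G all equal S
  have hsum : ∀ x : α, ∑ v ∈ nbr G x, g v = S := by
    intro x
    have := hS (Sum.inl x)
    rw [nbr_sum_inl G H x, Finset.sum_map] at this
    simpa using this
  -- splitting sums
  have hsplit : ∀ i : ℕ, ∑ v ∈ N i \ N (i + 1), g v + ∑ v ∈ N i ∩ N (i + 1), g v = S ∧
      ∑ v ∈ N (i + 1) \ N i, g v + ∑ v ∈ N i ∩ N (i + 1), g v = S := by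
    intro i
    constructor
    · have := Finset.sum_sdiff (f := g) (Finset.inter_subset_left : N i ∩ N (i + 1) ⊆ N i)
      rwa [Finset.sdiff_inter_self_left, hsum (u i)] at this
    · have := Finset.sum_sdiff (f := g) (Finset.inter_subset_right : N i ∩ N (i + 1) ⊆ N (i + 1))
      rwa [Finset.sdiff_inter_self_right, hsum (u (i + 1))] at this
  have hb : ∀ i : ℕ, ∑ v ∈ N (i + 1) \ N i, g v = ∑ v ∈ N i \ N (i + 1), g v := by
    intro i
    have h1 := (hsplit i).1
    have h2' := (hsplit i).2
    omega
  -- Finset disjointness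
  have hdisj : ∀ i, 1 ≤ i → i + 2 ≤ k → N i ∩ N (i + 2) = ∅ := by
    intro i hi hik
    have hne : ¬(i = 1 ∧ i + 2 = k) := by omega
    have := h2 i (i + 2) hi le_rfl hik hne
    ext x
    simp only [hN, Finset.mem_inter, mem_nbr, Finset.notMem_empty, iff_false]
    intro ⟨ha, hb'⟩
    exact Set.eq_empty_iff_forall_notMem.mp this x ⟨ha, hb'⟩
  -- key structure lemmas
  have hBA : ∀ i, 1 ≤ i → i + 2 ≤ k → N (i + 1) ∩ N (i + 2) = N (i + 1) \ N i := by
    intro i hi hik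
    have hd := hdisj i hi hik
    have hs := h6 i hi hik
    ext x
    simp only [hN, Finset.mem_inter, Finset.mem_sdiff, mem_nbr]
    constructor
    · rintro ⟨hx1, hx2⟩
      refine ⟨hx1, fun hx0 => ?_⟩
      have : x ∈ N i ∩ N (i + 2) := by
        simp only [hN, Finset.mem_inter, mem_nbr]; exact ⟨hx0, hx2⟩
      simp [hd] at this
    · rintro ⟨hx1, hx0⟩
      exact ⟨hx1, hs ⟨hx1, hx0⟩⟩
  have hDA : ∀ i, 1 ≤ i → i + 2 ≤ k → N (i + 1) \ N (i + 2) = N i ∩ N (i + 1) := by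
    intro i hi hik
    have hd := hdisj i hi hik
    have hs := h6 i hi hik
    ext x
    simp only [hN, Finset.mem_inter, Finset.mem_sdiff, mem_nbr]
    constructor
    · rintro ⟨hx1, hx2⟩
      refine ⟨?_, hx1⟩
      by_contra hx0
      exact hx2 (hs ⟨hx1, hx0⟩)
    · rintro ⟨hx0, hx1⟩
      refine ⟨hx1, fun hx2 => ?_⟩
      have : x ∈ N i ∩ N (i + 2) := by
        simp only [hN, Finset.mem_inter, mem_nbr]; exact ⟨hx0, hx2⟩
      simp [hd] at this
  -- define d
  set d : ℕ → ℕ := fun i => ∑ v ∈ N i \ N (i + 1), g v with hd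
  have hrec : ∀ i, 1 ≤ i → i + 3 ≤ k → d (i + 2) = d i := by
    intro i hi hik
    have e1 : N (i + 2) \ N (i + 3) = N (i + 1) ∩ N (i + 2) := by
      have := hDA (i + 1) (by omega) (by omega)
      simpa [show i + 1 + 1 = i + 2 by ring, show i + 1 + 2 = i + 3 by ring] using this
    have e2 := hBA i hi (by omega)
    calc d (i + 2) = ∑ v ∈ N (i + 2) \ N (i + 3), g v := rfl
      _ = ∑ v ∈ N (i + 1) ∩ N (i + 2), g v := by rw [e1]
      _ = ∑ v ∈ N (i + 1) \ N i, g v := by rw [e2]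
      _ = d i := hb i
  have hodd : ∀ j : ℕ, 2 * j + 1 ≤ k - 1 → d (2 * j + 1) = d 1 := by
    intro j
    induction j with
    | zero => intro; rfl
    | succ m ih =>
      intro hj
      have e : 2 * (m + 1) + 1 = (2 * m + 1) + 2 := by ring
      rw [e, hrec (2 * m + 1) (by omega) (by omega), ih (by omega)]
  -- finish
  have hkm1 : k - 1 + 1 = k := by omega
  have hdk : d (k - 1) = d 1 := by
    have := hodd (n - 1) (by omega)
    have e : 2 * (n - 1) + 1 = k - 1 := by omega
    rwa [e] at this
  -- d 1 = g v₁
  have hN12 : N 1 \ N 2 = ({v₁} : Finset α) := by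
    ext x
    simp only [hN, Finset.mem_sdiff, mem_nbr, Finset.mem_singleton]
    exact Set.ext_iff.mp h3 x
  have hd1 : d 1 = g v₁ := by
    show ∑ v ∈ N 1 \ N (1 + 1), g v = g v₁
    rw [show (1 : ℕ) + 1 = 2 from rfl, hN12, Finset.sum_singleton]
  -- g v₂ = d (k - 1)
  have hNk : N k \ N (k - 1) = ({v₂} : Finset α) := by
    ext x
    simp only [hN, Finset.mem_sdiff, mem_nbr, Finset.mem_singleton]
    exact Set.ext_iff.mp h4 x
  have hd2 : g v₂ = d (k - 1) := by
    have hbk := hb (k - 1)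
    rw [hkm1] at hbk
    have e : d (k - 1) = ∑ v ∈ N (k - 1) \ N k, g v := by
      show ∑ v ∈ N (k - 1) \ N (k - 1 + 1), g v = _
      rw [hkm1]
    rw [e, ← hbk, hNk, Finset.sum_singleton]
  have : g v₁ = g v₂ := by rw [← hd1, ← hdk, hd2]
  have hinj := hbij.injOn
  have : Sum.inl v₁ = Sum.inl v₂ :=
    hinj (Set.mem_univ _) (Set.mem_univ _) this
  exact h5 (Sum.inl_injective this)
end
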